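/- arXiv:1802.05566 — 2 statements merged into one kernel-verified Lean document; each statement's English description precedes it below -/
import Mathlib

section
/- Gradient flow structure of the extended Maxwell model (Theorem 3.1(i)): let (u, φ) : [0, T] → X × Ψ be continuously differentiable with u(t) ∈ g + V for all t, and suppose that for all t ∈ (0, T): (a) ⟪C(e u(t) − φ(t)), e v⟫_Ψ = ℓ(v) for all v ∈ V, and (b) η φ'(t) + α φ(t) − C(e u(t) − φ(t)) = 0 in Ψ. Then for every t ∈ (0, T) and every ψ ∈ Ψ, η⟪φ'(t), ψ⟫_Ψ = −(∂E_*)(φ(t))[ψ]. -/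
/-!
Both `u(t)` and `ū(φ(t))` solve the weak equation with data `φ(t)`, so they coincide by the
coercivity of `a` on `V`. The weak solutions depend affinely on `φ` (the weak equation is linear
and its solutions are unique), so `ε ↦ E_*(φ + εψ)` is a quadratic polynomial in `ε`, and its
derivative at `0` is the partial derivative of `E` along `(w, ψ)`, `w = ū(φ + ψ) - ū(φ) ∈ V`. The weak equation
kills the `w`-part, leaving `⟪αφ - σ, ψ⟫` with `σ = C(e ū(φ) - φ)`, and the flow rule
`σ = ηφ' + αφ` turns this into `-η⟪φ', ψ⟫`.
-/

open scoped RealInnerProductSpace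

section WeakSolution

variable {X Ψ : Type*} [NormedAddCommGroup X] [InnerProductSpace ℝ X]
  [NormedAddCommGroup Ψ] [InnerProductSpace ℝ Ψ]

def IsWeakSolution (V : Submodule ℝ X) (e : X →L[ℝ] Ψ) (C : Ψ →L[ℝ] Ψ) (ℓ : X →L[ℝ] ℝ) (g : X)
    (φ : Ψ) (u : X) : Prop :=
  u - g ∈ V ∧ ∀ v ∈ V, ⟪C (e u - φ), e v⟫ = ℓ v

variable {V : Submodule ℝ X} {e : X →L[ℝ] Ψ} {C : Ψ →L[ℝ] Ψ} {ℓ : X →L[ℝ] ℝ} {g : X}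

theorem eq_zero_of_coercive_of_forall_inner_eq_zero {c₀ : ℝ} (hc₀ : 0 < c₀)
    (hacoer : ∀ v ∈ V, c₀ * ‖v‖ ^ 2 ≤ ⟪C (e v), e v⟫) {w : X} (hw : w ∈ V)
    (h : ∀ v ∈ V, ⟪C (e w), e v⟫ = 0) : w = 0 := by
  have hsq : c₀ * ‖w‖ ^ 2 ≤ 0 := h w hw ▸ hacoer w hw
  have hnorm : ‖w‖ ^ 2 = 0 := le_antisymm (nonpos_of_mul_nonpos_right hsq hc₀) (sq_nonneg _)
  simpa using hnorm

theorem IsWeakSolution.unique {c₀ : ℝ} (hc₀ : 0 < c₀)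
    (hacoer : ∀ v ∈ V, c₀ * ‖v‖ ^ 2 ≤ ⟪C (e v), e v⟫) {φ : Ψ} {u₁ u₂ : X}
    (h₁ : IsWeakSolution V e C ℓ g φ u₁) (h₂ : IsWeakSolution V e C ℓ g φ u₂) : u₁ = u₂ := by
  have hmem : u₁ - u₂ ∈ V := by simpa using sub_mem h₁.1 h₂.1
  refine sub_eq_zero.mp (eq_zero_of_coercive_of_forall_inner_eq_zero hc₀ hacoer hmem ?_)
  intro v hv
  have hstress : C (e (u₁ - u₂)) = C (e u₁ - φ) - C (e u₂ - φ) := by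
    rw [← map_sub, map_sub]; congr 1; abel
  rw [hstress, inner_sub_left, h₁.2 v hv, h₂.2 v hv, sub_self]

theorem IsWeakSolution.add_smul_sub {φ ψ : Ψ} {u₀ u₁ : X}
    (h₀ : IsWeakSolution V e C ℓ g φ u₀) (h₁ : IsWeakSolution V e C ℓ g (φ + ψ) u₁) (s : ℝ) :
    IsWeakSolution V e C ℓ g (φ + s • ψ) (u₀ + s • (u₁ - u₀)) := by
  refine ⟨?_, fun v hv => ?_⟩
  · have hmem : (u₀ - g) + s • ((u₁ - g) - (u₀ - g)) ∈ V :=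
      add_mem h₀.1 (V.smul_mem s (sub_mem h₁.1 h₀.1))
    convert hmem using 1
    module
  · have hstress : C (e (u₀ + s • (u₁ - u₀)) - (φ + s • ψ))
        = C (e u₀ - φ) + s • (C (e u₁ - (φ + ψ)) - C (e u₀ - φ)) := by
      simp only [map_add, map_sub, map_smul, smul_sub, smul_add]
      abel
    rw [hstress, inner_add_left, real_inner_smul_left, inner_sub_left, h₀.2 v hv, h₁.2 v hv]
    ring

end WeakSolution

section Derivatives

variable {X Ψ : Type*} [NormedAddCommGroup X] [InnerProductSpace ℝ X]
  [NormedAddCommGroup Ψ] [InnerProductSpace ℝ Ψ]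

theorem hasDerivAt_inner_apply_self_line {C : Ψ →L[ℝ] Ψ} (hC : (C : Ψ →ₗ[ℝ] Ψ).IsSymmetric)
    (a b : Ψ) (s : ℝ) :
    HasDerivAt (fun s : ℝ => ⟪C (a + s • b), a + s • b⟫) (2 * ⟪C (a + s • b), b⟫) s := by
  have hline : HasDerivAt (fun s : ℝ => a + s • b) b s := by
    simpa using ((hasDerivAt_id s).smul_const b).const_add a
  refine ((C.hasFDerivAt.comp_hasDerivAt s hline).inner ℝ hline).congr_deriv ?_
  rw [Function.comp_apply,
    show ⟪C b, a + s • b⟫ = ⟪C (a + s • b), b⟫ from (hC b _).trans (real_inner_comm _ _)]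
  ring

theorem hasDerivAt_energy_line {e : X →L[ℝ] Ψ} {C : Ψ →L[ℝ] Ψ}
    (hC : (C : Ψ →ₗ[ℝ] Ψ).IsSymmetric) {ℓ : X →L[ℝ] ℝ} {α : ℝ} {E : X → Ψ → ℝ}
    (hE : ∀ u φ, E u φ = (1 / 2) * ⟪C (e u - φ), e u - φ⟫ + (α / 2) * ‖φ‖ ^ 2 - ℓ u)
    (u w : X) (φ ψ : Ψ) :
    HasDerivAt (fun s : ℝ => E (u + s • w) (φ + s • ψ))
      (⟪C (e u - φ), e w - ψ⟫ + α * ⟪φ, ψ⟫ - ℓ w) 0 := by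
  have hstrain : ∀ s : ℝ, e (u + s • w) - (φ + s • ψ) = (e u - φ) + s • (e w - ψ) := by
    intro s
    simp only [map_add, map_smul, smul_sub]
    abel
  have hload : ∀ s : ℝ, ℓ (u + s • w) = ℓ u + s * ℓ w := by simp
  simp_rw [hE, hstrain, hload]
  have hψ : HasDerivAt (fun s : ℝ => φ + s • ψ) ψ 0 := by
    simpa using ((hasDerivAt_id (0 : ℝ)).smul_const ψ).const_add φ
  refine ((((hasDerivAt_inner_apply_self_line hC (e u - φ) (e w - ψ) 0).const_mul (1 / 2)).add
    (hψ.norm_sq.const_mul (α / 2))).sub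
      (((hasDerivAt_id (0 : ℝ)).mul_const (ℓ w)).const_add (ℓ u))).congr_deriv ?_
  simp only [zero_smul, add_zero]
  ring

end Derivatives

section ReducedEnergy

variable {X Ψ : Type*} [NormedAddCommGroup X] [InnerProductSpace ℝ X]
  [NormedAddCommGroup Ψ] [InnerProductSpace ℝ Ψ]
  {V : Submodule ℝ X} {e : X →L[ℝ] Ψ} {C : Ψ →L[ℝ] Ψ} {ℓ : X →L[ℝ] ℝ} {g : X}

theorem hasDerivAt_reducedEnergy_line (hC : (C : Ψ →ₗ[ℝ] Ψ).IsSymmetric) {c₀ : ℝ} (hc₀ : 0 < c₀)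
    (hacoer : ∀ v ∈ V, c₀ * ‖v‖ ^ 2 ≤ ⟪C (e v), e v⟫) {α : ℝ} {E : X → Ψ → ℝ}
    (hE : ∀ u φ, E u φ = (1 / 2) * ⟪C (e u - φ), e u - φ⟫ + (α / 2) * ‖φ‖ ^ 2 - ℓ u)
    {ubar : Ψ → X} (hubar : ∀ φ, IsWeakSolution V e C ℓ g φ (ubar φ))
    {Estar : Ψ → ℝ} (hEstar : ∀ φ, Estar φ = E (ubar φ) φ) (φ ψ : Ψ) :
    HasDerivAt (fun s : ℝ => Estar (φ + s • ψ))
      (α * ⟪φ, ψ⟫ - ⟪C (e (ubar φ) - φ), ψ⟫) 0 := by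
  set w := ubar (φ + ψ) - ubar φ
  have hw : w ∈ V := by simpa [w] using sub_mem (hubar (φ + ψ)).1 (hubar φ).1
  have hline : ∀ s : ℝ, Estar (φ + s • ψ) = E (ubar φ + s • w) (φ + s • ψ) := fun s => by
    rw [hEstar, (hubar _).unique hc₀ hacoer ((hubar φ).add_smul_sub (hubar (φ + ψ)) s)]
  simp_rw [hline]
  convert hasDerivAt_energy_line hC hE (ubar φ) w φ ψ using 1
  rw [inner_sub_right, (hubar φ).2 w hw]
  ring

end ReducedEnergy

theorem stmt_4_general
    {X Ψ : Type*}
    [NormedAddCommGroup X] [InnerProductSpace ℝ X]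
    [NormedAddCommGroup Ψ] [InnerProductSpace ℝ Ψ]
    (V : Submodule ℝ X)
    (e : X →L[ℝ] Ψ) (C : Ψ →L[ℝ] Ψ)
    (hCsym : ∀ φ ψ : Ψ, ⟪C φ, ψ⟫ = ⟪φ, C ψ⟫)
    (c₀ : ℝ) (hc₀ : 0 < c₀)
    (hacoer : ∀ v ∈ V, c₀ * ‖v‖ ^ 2 ≤ ⟪C (e v), e v⟫)
    (ℓ : X →L[ℝ] ℝ) (g : X) (η α : ℝ)
    (E : X → Ψ → ℝ)
    (hE : ∀ u φ, E u φ =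
      (1 / 2) * ⟪C (e u - φ), e u - φ⟫ + (α / 2) * ‖φ‖ ^ 2 - ℓ u)
    (ubar : Ψ → X)
    (hubar_mem : ∀ φ : Ψ, ubar φ - g ∈ V)
    (hubar_weak : ∀ φ : Ψ, ∀ v ∈ V, ⟪C (e (ubar φ) - φ), e v⟫ = ℓ v)
    (Estar : Ψ → ℝ)
    (hEstar : ∀ φ : Ψ, Estar φ = E (ubar φ) φ)
    (T : ℝ)
    (u : ℝ → X) (φ : ℝ → Ψ) (φ' : ℝ → Ψ)
    (hu_mem : ∀ t ∈ Set.Icc (0 : ℝ) T, u t - g ∈ V)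
    (heq1 : ∀ t ∈ Set.Ioo (0 : ℝ) T, ∀ v ∈ V, ⟪C (e (u t) - φ t), e v⟫ = ℓ v)
    (heq2 : ∀ t ∈ Set.Ioo (0 : ℝ) T,
      η • φ' t + α • φ t - C (e (u t) - φ t) = 0) :
    ∀ t ∈ Set.Ioo (0 : ℝ) T, ∀ ψ : Ψ,
      HasDerivAt (fun ε : ℝ => Estar (φ t + ε • ψ)) (-(η * ⟪φ' t, ψ⟫)) 0 := by
  intro t ht ψ
  have hubar : ∀ φ, IsWeakSolution V e C ℓ g φ (ubar φ) := fun φ => ⟨hubar_mem φ, hubar_weak φ⟩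
  have hu : u t = ubar (φ t) :=
    IsWeakSolution.unique hc₀ hacoer ⟨hu_mem t (Set.Ioo_subset_Icc_self ht), heq1 t ht⟩ (hubar _)
  have hstress : C (e (u t) - φ t) = η • φ' t + α • φ t := (sub_eq_zero.mp (heq2 t ht)).symm
  convert hasDerivAt_reducedEnergy_line hCsym hc₀ hacoer hE hubar hEstar (φ t) ψ using 1
  rw [← hu, hstress, inner_add_left, real_inner_smul_left, real_inner_smul_left]
  ring

/-- Gradient flow structure of the extended Maxwell model (Theorem 3.1(i)):
for a C¹ solution `(u, φ)` of the weak formulation, `η⟪φ'(t), ψ⟫ = −(∂E_*)(φ(t))[ψ]`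
for all `t ∈ (0, T)` and `ψ ∈ Ψ`. -/
theorem stmt_4
    {X Ψ : Type*}
    [NormedAddCommGroup X] [InnerProductSpace ℝ X] [CompleteSpace X]
    [NormedAddCommGroup Ψ] [InnerProductSpace ℝ Ψ] [CompleteSpace Ψ]
    (V : Submodule ℝ X) (hV : IsClosed (V : Set X))
    (e : X →L[ℝ] Ψ) (C : Ψ →L[ℝ] Ψ)
    (hCsym : ∀ φ ψ : Ψ, ⟪C φ, ψ⟫ = ⟪φ, C ψ⟫)
    (cstar : ℝ) (hcstar : 0 < cstar)
    (hCcoer : ∀ ψ : Ψ, cstar * ‖ψ‖ ^ 2 ≤ ⟪C ψ, ψ⟫)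
    (c₀ : ℝ) (hc₀ : 0 < c₀)
    (hacoer : ∀ v ∈ V, c₀ * ‖v‖ ^ 2 ≤ ⟪C (e v), e v⟫)
    (ℓ : X →L[ℝ] ℝ) (g : X) (η α : ℝ) (hη : 0 < η) (hα : 0 ≤ α)
    (E : X → Ψ → ℝ)
    (hE : ∀ u φ, E u φ =
      (1 / 2) * ⟪C (e u - φ), e u - φ⟫ + (α / 2) * ‖φ‖ ^ 2 - ℓ u)
    (ubar : Ψ → X)
    (hubar_mem : ∀ φ : Ψ, ubar φ - g ∈ V)
    (hubar_weak : ∀ φ : Ψ, ∀ v ∈ V, ⟪C (e (ubar φ) - φ), e v⟫ = ℓ v)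
    (hubar_min : ∀ φ : Ψ, ∀ v : X, v - g ∈ V → E (ubar φ) φ ≤ E v φ)
    (Estar : Ψ → ℝ)
    (hEstar : ∀ φ : Ψ, Estar φ = E (ubar φ) φ)
    (T : ℝ) (hT : 0 < T)
    (u : ℝ → X) (φ : ℝ → Ψ) (u' : ℝ → X) (φ' : ℝ → Ψ)
    (hu_deriv : ∀ t ∈ Set.Icc (0 : ℝ) T, HasDerivAt u (u' t) t)
    (hφ_deriv : ∀ t ∈ Set.Icc (0 : ℝ) T, HasDerivAt φ (φ' t) t)
    (hu'_cont : ContinuousOn u' (Set.Icc (0 : ℝ) T))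
    (hφ'_cont : ContinuousOn φ' (Set.Icc (0 : ℝ) T))
    (hu_mem : ∀ t ∈ Set.Icc (0 : ℝ) T, u t - g ∈ V)
    (heq1 : ∀ t ∈ Set.Ioo (0 : ℝ) T, ∀ v ∈ V, ⟪C (e (u t) - φ t), e v⟫ = ℓ v)
    (heq2 : ∀ t ∈ Set.Ioo (0 : ℝ) T,
      η • φ' t + α • φ t - C (e (u t) - φ t) = 0) :
    ∀ t ∈ Set.Ioo (0 : ℝ) T, ∀ ψ : Ψ,
      HasDerivAt (fun ε : ℝ => Estar (φ t + ε • ψ)) (-(η * ⟪φ' t, ψ⟫)) 0 :=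
  stmt_4_general V e C hCsym c₀ hc₀ hacoer ℓ g η α E hE ubar hubar_mem hubar_weak Estar hEstar T u φ
    φ' hu_mem heq1 heq2
end

section
/- Discrete energy decay identity for the Galerkin (finite element) scheme (Theorem 5.2(ii)): assume time-independent data ℓ ∈ X' and g_h ∈ X with e(g_h) ∈ Ψ_h, let (u_h^k, φ_h^k) ∈ (g_h + V_h) × Ψ_h, k = 0, …, N, be the solution of the discrete scheme, and set E_h^k := E(u_h^k, φ_h^k), D̄_τ ρ^k := (ρ^k − ρ^{k−1})/τ. Then for every k = 1, …, N: D̄_τ E_h^k + (ατ/2)‖D̄_τ φ_h^k‖_Ψ² + (τ/2)⟪C(D̄_τ(e u_h^k − φ_h^k)), D̄_τ(e u_h^k − φ_h^k)⟫_Ψ = −η‖D̄_τ φ_h^k‖_Ψ² ≤ 0. -/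
/-!
Testing the constitutive equation against `φᵏ - φᵏ⁻¹` and the balance equation against
`uᵏ - uᵏ⁻¹ ∈ V_h` expresses every first-order term of `Eᵏ - Eᵏ⁻¹` through
`‖φᵏ - φᵏ⁻¹‖²`; what is left are the second-order remainders of the polarization identity
`q(a) - q(b) = 2 q(a, a - b) - q(a - b)` for the symmetric forms `⟪C ·, ·⟫` and `‖·‖²`,
which are exactly the numerical dissipation terms of the backward Euler step.
-/

open scoped RealInnerProductSpace

section

variable {X Ψ : Type*} [NormedAddCommGroup X] [InnerProductSpace ℝ X]
  [NormedAddCommGroup Ψ] [InnerProductSpace ℝ Ψ]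

theorem LinearMap.IsSymmetric.inner_map_self_sub_inner_map_self {T : Ψ →ₗ[ℝ] Ψ}
    (hT : T.IsSymmetric) (a b : Ψ) :
    ⟪T a, a⟫ - ⟪T b, b⟫ = 2 * ⟪T a, a - b⟫ - ⟪T (a - b), a - b⟫ := by
  simp only [map_sub, inner_sub_left, inner_sub_right]
  rw [hT b a, real_inner_comm (T a) b]
  ring

theorem norm_sq_sub_norm_sq_eq (a b : Ψ) :
    ‖a‖ ^ 2 - ‖b‖ ^ 2 = 2 * ⟪a, a - b⟫ - ‖a - b‖ ^ 2 := by
  simpa only [LinearMap.id_apply, real_inner_self_eq_norm_sq] using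
    LinearMap.IsSymmetric.id.inner_map_self_sub_inner_map_self a b

noncomputable def energy (C : Ψ →L[ℝ] Ψ) (e : X →L[ℝ] Ψ) (ℓ : X →L[ℝ] ℝ) (α : ℝ)
    (u : X) (φ : Ψ) : ℝ :=
  (1 / 2) * ⟪C (e u - φ), e u - φ⟫ + (α / 2) * ‖φ‖ ^ 2 - ℓ u

theorem energy_sub_energy_of_step {C : Ψ →L[ℝ] Ψ} (hC : (C : Ψ →ₗ[ℝ] Ψ).IsSymmetric)
    {e : X →L[ℝ] Ψ} {ℓ : X →L[ℝ] ℝ} {η τ α : ℝ} {u u' : X} {φ φ' : Ψ}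
    (hbalance : ⟪C (e u - φ), e (u - u')⟫ = ℓ (u - u'))
    (hflow : C (e u - φ) = (η / τ) • (φ - φ') + α • φ) :
    energy C e ℓ α u φ - energy C e ℓ α u' φ' =
      -(η / τ) * ‖φ - φ'‖ ^ 2 - (α / 2) * ‖φ - φ'‖ ^ 2
        - (1 / 2) * ⟪C ((e u - φ) - (e u' - φ')), (e u - φ) - (e u' - φ')⟫ := by
  have hpolar := hC.inner_map_self_sub_inner_map_self (e u - φ) (e u' - φ')
  simp only [ContinuousLinearMap.coe_coe] at hpolar
  have hincrement : (e u - φ) - (e u' - φ') = e (u - u') - (φ - φ') := by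
    rw [map_sub]; abel
  have hdissip : ⟪C (e u - φ), φ - φ'⟫ = (η / τ) * ‖φ - φ'‖ ^ 2 + α * ⟪φ, φ - φ'⟫ := by
    rw [hflow, inner_add_left, real_inner_smul_left, real_inner_smul_left,
      real_inner_self_eq_norm_sq]
  have hcross : ⟪C (e u - φ), (e u - φ) - (e u' - φ')⟫ =
      ℓ (u - u') - (η / τ) * ‖φ - φ'‖ ^ 2 - α * ⟪φ, φ - φ'⟫ := by
    rw [hincrement, inner_sub_right, hbalance, hdissip]; ring
  unfold energy
  linear_combination (1 / 2) * hpolar + hcross + (α / 2) * norm_sq_sub_norm_sq_eq φ φ'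
    + map_sub ℓ u u'

end

theorem stmt_14_general
    {X Ψ : Type*}
    [NormedAddCommGroup X] [InnerProductSpace ℝ X]
    [NormedAddCommGroup Ψ] [InnerProductSpace ℝ Ψ]
    (e : X →L[ℝ] Ψ) (C : Ψ →L[ℝ] Ψ)
    (hCsym : ∀ φ ψ : Ψ, ⟪C φ, ψ⟫ = ⟪φ, C ψ⟫)
    (η α : ℝ) (hη : 0 < η)
    (Vh : Submodule ℝ X)
    (τ : ℝ) (hτ : 0 < τ) (N : ℕ)
    (ℓ : X →L[ℝ] ℝ) (gh : X)
    (E : X → Ψ → ℝ)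
    (hE : ∀ u φ, E u φ =
      (1 / 2) * ⟪C (e u - φ), e u - φ⟫ + (α / 2) * ‖φ‖ ^ 2 - ℓ u)
    (u : ℕ → X) (φ : ℕ → Ψ)
    (hmem : ∀ k ≤ N, u k - gh ∈ Vh)
    (heq1 : ∀ k ≤ N, ∀ v ∈ Vh, ⟪C (e (u k) - φ k), e v⟫ = ℓ v)
    (heq2 : ∀ k, 1 ≤ k → k ≤ N →
      (η / τ) • (φ k - φ (k - 1)) + α • φ k - C (e (u k) - φ k) = 0) :
    ∀ k, 1 ≤ k → k ≤ N →
      (E (u k) (φ k) - E (u (k - 1)) (φ (k - 1))) / τ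
        + (α * τ / 2) * ‖τ⁻¹ • (φ k - φ (k - 1))‖ ^ 2
        + (τ / 2) * ⟪C (τ⁻¹ • ((e (u k) - φ k) - (e (u (k - 1)) - φ (k - 1)))),
            τ⁻¹ • ((e (u k) - φ k) - (e (u (k - 1)) - φ (k - 1)))⟫
        = -(η * ‖τ⁻¹ • (φ k - φ (k - 1))‖ ^ 2) ∧
      -(η * ‖τ⁻¹ • (φ k - φ (k - 1))‖ ^ 2) ≤ 0 := by
  intro k hk hkN
  obtain rfl : E = energy C e ℓ α := funext fun u => funext (hE u)
  have hincrement : u k - u (k - 1) ∈ Vh := by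
    simpa only [sub_sub_sub_cancel_right] using
      Vh.sub_mem (hmem k hkN) (hmem (k - 1) (by omega))
  have hstep := energy_sub_energy_of_step hCsym (heq1 k hkN _ hincrement)
    (sub_eq_zero.mp (heq2 k hk hkN)).symm
  refine ⟨?_, neg_nonpos.mpr (by positivity)⟩
  simp only [map_smul, real_inner_smul_left, real_inner_smul_right, norm_smul, mul_pow,
    norm_inv, inv_pow, Real.norm_eq_abs, sq_abs, hstep]
  field_simp
  ring

/-- Discrete energy decay identity for the Galerkin (finite element) scheme
(Theorem 5.2(ii)): for the solution of the discrete scheme with time-independent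
data, `D̄_τ E_hᵏ + (ατ/2)‖D̄_τ φ_hᵏ‖² + (τ/2)⟪C D̄_τ(e u_hᵏ − φ_hᵏ), D̄_τ(e u_hᵏ − φ_hᵏ)⟫
= −η‖D̄_τ φ_hᵏ‖² ≤ 0`. -/
theorem stmt_14
    {X Ψ : Type*}
    [NormedAddCommGroup X] [InnerProductSpace ℝ X] [CompleteSpace X]
    [NormedAddCommGroup Ψ] [InnerProductSpace ℝ Ψ] [CompleteSpace Ψ]
    (V : Submodule ℝ X) (hV : IsClosed (V : Set X))
    (e : X →L[ℝ] Ψ) (C : Ψ →L[ℝ] Ψ)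
    (hCsym : ∀ φ ψ : Ψ, ⟪C φ, ψ⟫ = ⟪φ, C ψ⟫)
    (cstar : ℝ) (hcstar : 0 < cstar)
    (hCcoer : ∀ ψ : Ψ, cstar * ‖ψ‖ ^ 2 ≤ ⟪C ψ, ψ⟫)
    (c₀ : ℝ) (hc₀ : 0 < c₀)
    (hacoer : ∀ v ∈ V, c₀ * ‖v‖ ^ 2 ≤ ⟪C (e v), e v⟫)
    (η α : ℝ) (hη : 0 < η) (hα : 0 ≤ α)
    (Vh : Submodule ℝ X) (hVhV : Vh ≤ V) (hVh : IsClosed (Vh : Set X))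
    (Ψh : Submodule ℝ Ψ) (hΨh : IsClosed (Ψh : Set Ψ))
    (he_h : ∀ v ∈ Vh, e v ∈ Ψh)
    (hC_h : ∀ ψ ∈ Ψh, C ψ ∈ Ψh)
    (τ : ℝ) (hτ : 0 < τ) (N : ℕ)
    (ℓ : X →L[ℝ] ℝ) (gh : X) (hgh : e gh ∈ Ψh)
    (E : X → Ψ → ℝ)
    (hE : ∀ u φ, E u φ =
      (1 / 2) * ⟪C (e u - φ), e u - φ⟫ + (α / 2) * ‖φ‖ ^ 2 - ℓ u)
    (u : ℕ → X) (φ : ℕ → Ψ)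
    (hmem : ∀ k ≤ N, u k - gh ∈ Vh)
    (hφmem : ∀ k ≤ N, φ k ∈ Ψh)
    (heq1 : ∀ k ≤ N, ∀ v ∈ Vh, ⟪C (e (u k) - φ k), e v⟫ = ℓ v)
    (heq2 : ∀ k, 1 ≤ k → k ≤ N →
      (η / τ) • (φ k - φ (k - 1)) + α • φ k - C (e (u k) - φ k) = 0) :
    ∀ k, 1 ≤ k → k ≤ N →
      (E (u k) (φ k) - E (u (k - 1)) (φ (k - 1))) / τ
        + (α * τ / 2) * ‖τ⁻¹ • (φ k - φ (k - 1))‖ ^ 2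
        + (τ / 2) * ⟪C (τ⁻¹ • ((e (u k) - φ k) - (e (u (k - 1)) - φ (k - 1)))),
            τ⁻¹ • ((e (u k) - φ k) - (e (u (k - 1)) - φ (k - 1)))⟫
        = -(η * ‖τ⁻¹ • (φ k - φ (k - 1))‖ ^ 2) ∧
      -(η * ‖τ⁻¹ • (φ k - φ (k - 1))‖ ^ 2) ≤ 0 :=
  stmt_14_general e C hCsym η α hη Vh τ hτ N ℓ gh E hE u φ hmem heq1 heq2
end
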